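/- Let Λ be an invertible (n+1)×(n+1) matrix over a domain, representing an injective map with cokernel a module M that embeds into a domain S via elements g₁,…,g_{n+1} ∈ S (the images of the standard basis). Then Cramer's rule yields M_{i,j}·g_k = ± M_{k,j}·g_i in S for all i, j, k, where M_{i,j} denotes the submaximal minor of Λ obtained by deleting the i-th row and j-th column. -/

import Mathlib

/-!
The relations say that `g` is a left null vector of `A = Λ.map (algebraMap R S)`, i.e.
`∑ m, g m • A m = 0` in `S`. For any row `x`, scaling row `k` of `A.updateRow i x` by `g k` and
replacing `g k • A k` by `-∑_{m ≠ k} g m • A m` kills every term except `m = i` (repeated rows);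
swapping rows `i` and `k` then gives `g k * det (A.updateRow i x) = g i * det (A.updateRow k x)`.
For `x = Pi.single j 1` both determinants are cofactors, i.e. signed minors deleting column `j`.
-/

namespace Matrix

variable {n R : Type*} [Fintype n] [DecidableEq n] [CommRing R]

theorem mul_det_updateRow_eq_of_vecMul_eq_zero {A : Matrix n n R} {G : n → R}
    (hG : G ᵥ* A = 0) (i k : n) (x : n → R) :
    G k * (A.updateRow i x).det = G i * (A.updateRow k x).det := by
  obtain rfl | hik := eq_or_ne i k
  · rfl
  set B := A.updateRow i x
  have hcomb : ∑ m, Function.update G i 0 m • B m = -(G i • A i) := by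
    calc ∑ m, Function.update G i 0 m • B m = ∑ m ∈ Finset.univ.erase i, G m • A m := by
          rw [← Finset.add_sum_erase _ _ (Finset.mem_univ i), Function.update_self, zero_smul,
            zero_add]
          refine Finset.sum_congr rfl fun m hm => ?_
          simp [B, Finset.ne_of_mem_erase hm]
      _ = -(G i • A i) := by
          rw [eq_neg_iff_add_eq_zero, add_comm,
            Finset.add_sum_erase Finset.univ (fun m => G m • A m) (Finset.mem_univ i),
            ← vecMul_eq_sum, hG]
  have hswap : (B.updateRow k (A i)).det = -(A.updateRow k x).det := by
    have : B.updateRow k (A i) = (A.updateRow k x).submatrix (Equiv.swap i k) id := by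
      ext a b
      rcases eq_or_ne a i with rfl | hai
      · simp [B, hik]
      rcases eq_or_ne a k with rfl | hak
      · simp [B, hik]
      · simp [B, hai, hak, Equiv.swap_apply_of_ne_of_ne]
    rw [this, det_permute, Equiv.Perm.sign_swap hik]
    simp
  have h := det_updateRow_sum B k (Function.update G i 0)
  rw [hcomb, ← neg_smul, det_updateRow_smul, hswap, Function.update_of_ne hik.symm] at h
  rw [← smul_eq_mul, ← h]
  ring

theorem det_submatrix_succAbove_mul_eq_of_vecMul_eq_zero {m : ℕ}
    {A : Matrix (Fin (m + 1)) (Fin (m + 1)) R} {G : Fin (m + 1) → R} (hG : G ᵥ* A = 0)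
    (i k j : Fin (m + 1)) :
    (A.submatrix i.succAbove j.succAbove).det * G k =
      (-1) ^ ((i : ℕ) + (k : ℕ)) * (A.submatrix k.succAbove j.succAbove).det * G i := by
  have h := mul_det_updateRow_eq_of_vecMul_eq_zero hG i k (Pi.single j 1)
  rw [← adjugate_apply, ← adjugate_apply, adjugate_fin_succ_eq_det_submatrix,
    adjugate_fin_succ_eq_det_submatrix, pow_add, pow_add] at h
  have sq (a : ℕ) : ((-1 : R) ^ a) ^ 2 = 1 := by rw [← pow_mul, pow_mul', neg_one_sq, one_pow]
  rw [pow_add]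
  linear_combination (-1 : R) ^ (i : ℕ) * (-1) ^ (j : ℕ) * h
    - (A.submatrix i.succAbove j.succAbove).det * G k * (sq i + ((-1 : R) ^ (i : ℕ)) ^ 2 * sq j)
    + (-1) ^ (i : ℕ) * (-1) ^ (k : ℕ) * (A.submatrix k.succAbove j.succAbove).det * G i * sq j

end Matrix

theorem stmt_14_general {n : ℕ} {R S : Type*} [CommRing R]
    [CommRing S] [Algebra R S]
    (Λ : Matrix (Fin (n + 1)) (Fin (n + 1)) R)
    (g : Fin (n + 1) → S)
    (hrel : ∀ i, ∑ j, algebraMap R S (Λ j i) * g j = 0) :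
    ∀ i k j : Fin (n + 1),
      algebraMap R S (Λ.submatrix i.succAbove j.succAbove).det * g k =
        (-1 : S) ^ ((i : ℕ) + (k : ℕ)) *
          algebraMap R S (Λ.submatrix k.succAbove j.succAbove).det * g i := by
  intro i k j
  have hg : Matrix.vecMul g (Λ.map (algebraMap R S)) = 0 := by
    ext l
    simpa [Matrix.vecMul, dotProduct, mul_comm] using hrel l
  simp only [RingHom.map_det, RingHom.mapMatrix_apply, ← Matrix.submatrix_map]
  exact Matrix.det_submatrix_succAbove_mul_eq_of_vecMul_eq_zero hg i k j

/-- Cramer's rule relation for the cokernel of an injective square matrix.  Let `Λ` be an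
`(n+1) × (n+1)` matrix over a domain `R` with `det Λ ≠ 0`, and suppose the cokernel of `Λ`
embeds into a domain `S` (an `R`-algebra) via the images `g₁,…,g_{n+1}` of the standard basis:
the `gᵢ` satisfy the relations given by the columns of `Λ`, and any `R`-linear relation among
the `gᵢ` comes from a column combination of `Λ`.  Then `M_{i,j}·g_k = (−1)^{i+k}·M_{k,j}·g_i`
in `S` for all `i, j, k`, where `M_{i,j}` is the submaximal minor of `Λ` deleting row `i` and
column `j`. -/
theorem stmt_14 {n : ℕ} {R S : Type*} [CommRing R] [IsDomain R]
    [CommRing S] [IsDomain S] [Algebra R S]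
    (Λ : Matrix (Fin (n + 1)) (Fin (n + 1)) R) (hdet : Λ.det ≠ 0)
    (g : Fin (n + 1) → S)
    (hrel : ∀ i, ∑ j, algebraMap R S (Λ j i) * g j = 0)
    (hinj : ∀ c : Fin (n + 1) → R,
      ∑ i, algebraMap R S (c i) * g i = 0 → ∃ y, c = Λ.mulVec y) :
    ∀ i k j : Fin (n + 1),
      algebraMap R S (Λ.submatrix i.succAbove j.succAbove).det * g k =
        (-1 : S) ^ ((i : ℕ) + (k : ℕ)) *
          algebraMap R S (Λ.submatrix k.succAbove j.succAbove).det * g i :=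
  stmt_14_general Λ g hrel
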